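/- arXiv:2204.13475 — 8 statements merged into one kernel-verified Lean document; each statement's English description precedes it below -/
import Mathlib

section
/- Let u : ℤ → ℝ be a step image: there exist m ∈ ℤ and V₁, V₂ ∈ ℝ with u(j) = V₁ for all j ≤ m and u(j) = V₂ for all j > m. Then R(k) = 0 for every k ∈ ℤ, and consequently (Tu)(i) = u(i) for every i ∈ ℤ and every γ ∈ ℝ: the algorithm exactly preserves an isolated discontinuity and introduces no dissipation, whatever γ is. -/
/-!
A step image is constant on each side of the jump between `m` and `m + 1`, so the first
difference `d k` vanishes for every `k ≠ m`. At `k = m` the four-point stencil of `s m` straddles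
the jump symmetrically and reads `V₁ - V₁ - V₂ + V₂ = 0`. Hence each `R k`, which carries both a
factor vanishing with `d k` and the factor `s k`, vanishes, and with it every term of the update.
-/

section StepImage

variable {u : ℤ → ℝ} {m : ℤ} {V₁ V₂ : ℝ}

theorem step_succ_eq_of_ne (hu₁ : ∀ j ≤ m, u j = V₁) (hu₂ : ∀ j, m < j → u j = V₂)
    {k : ℤ} (hk : k ≠ m) : u (k + 1) = u k := by
  rcases hk.lt_or_gt with hk | hk
  · rw [hu₁ (k + 1) (by omega), hu₁ k hk.le]
  · rw [hu₂ (k + 1) (by omega), hu₂ k hk]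

theorem step_second_diff_at_jump (hu₁ : ∀ j ≤ m, u j = V₁) (hu₂ : ∀ j, m < j → u j = V₂) :
    u (m - 1) - u m - u (m + 1) + u (m + 2) = 0 := by
  rw [hu₁ (m - 1) (by omega), hu₁ m le_rfl, hu₂ (m + 1) (by omega), hu₂ (m + 2) (by omega)]
  ring

end StepImage

theorem stmt_4_general (h γ : ℝ)
    (u d s R Rint Tu : ℤ → ℝ)
    (hd : ∀ k : ℤ, d k = (u (k + 1) - u k) / h)
    (hs : ∀ k : ℤ, s k = (u (k - 1) - u k - u (k + 1) + u (k + 2)) / (2 * h ^ 2))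
    (hR : ∀ k : ℤ, R k = Real.sqrt ((d k) ^ 2 / (1 + (d k) ^ 2)) * s k)
    (hRint : ∀ i : ℤ, Rint i = (-R (i - 2) + 9 * R (i - 1) + 9 * R i - R (i + 1)) / 16)
    (hT : ∀ i : ℤ, Tu i = u i + γ * Rint i)
    (m : ℤ) (V₁ V₂ : ℝ)
    (hu₁ : ∀ j : ℤ, j ≤ m → u j = V₁)
    (hu₂ : ∀ j : ℤ, m < j → u j = V₂) :
    (∀ k : ℤ, R k = 0) ∧ (∀ i : ℤ, Tu i = u i) := by
  have hR_zero : ∀ k, R k = 0 := by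
    intro k
    rw [hR]
    rcases eq_or_ne k m with rfl | hk
    · rw [hs, step_second_diff_at_jump hu₁ hu₂, zero_div, mul_zero]
    · rw [hd, step_succ_eq_of_ne hu₁ hu₂ hk, sub_self, zero_div]
      simp
  refine ⟨hR_zero, fun i => ?_⟩
  simp [hT, hRint, hR_zero]

/-- The one-step anisotropic scheme exactly preserves a step image (an isolated
discontinuity): all the quantities R vanish and the update leaves the image
unchanged, whatever the parameter γ is. -/
theorem stmt_4 (h γ : ℝ) (hh : 0 < h)
    (u d s R Rint Tu : ℤ → ℝ)
    (hd : ∀ k : ℤ, d k = (u (k + 1) - u k) / h)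
    (hs : ∀ k : ℤ, s k = (u (k - 1) - u k - u (k + 1) + u (k + 2)) / (2 * h ^ 2))
    (hR : ∀ k : ℤ, R k = Real.sqrt ((d k) ^ 2 / (1 + (d k) ^ 2)) * s k)
    (hRint : ∀ i : ℤ, Rint i = (-R (i - 2) + 9 * R (i - 1) + 9 * R i - R (i + 1)) / 16)
    (hT : ∀ i : ℤ, Tu i = u i + γ * Rint i)
    (m : ℤ) (V₁ V₂ : ℝ)
    (hu₁ : ∀ j : ℤ, j ≤ m → u j = V₁)
    (hu₂ : ∀ j : ℤ, m < j → u j = V₂) :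
    (∀ k : ℤ, R k = 0) ∧ (∀ i : ℤ, Tu i = u i) :=
  stmt_4_general h γ u d s R Rint Tu hd hs hR hRint hT m V₁ V₂ hu₁ hu₂
end

section
/- Let m ∈ ℤ, V₁, V₂ ∈ ℝ with V₁ ≠ V₂, and let u : ℤ → ℝ be defined by u(j) = V₁ for j ≤ m − 1, u(m) = (V₁ + V₂)/2, and u(j) = V₂ for j ≥ m + 1. Set δ = V₂ − V₁, q = δ/(2h), and c = √(q²/(1 + q²)). Then one step of the algorithm gives exactly: (Tu)(m) = u(m); (Tu)(m−1) = V₁ + 5γcδ/(32h²); (Tu)(m+1) = V₂ − 5γcδ/(32h²); (Tu)(m−2) = V₁ − γcδ/(64h²); (Tu)(m+2) = V₂ + γcδ/(64h²); and (Tu)(j) = u(j) for all j with |j − m| ≥ 3. -/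
/-!
The first differences of the step vanish except at the two half-points `m ∓ 1/2`, where both
equal `q`, and the second differences there are `± δ / (4 h²)`. Hence `R` is a dipole: it vanishes
off `{m - 1, m}` and takes the opposite values `± c δ / (4 h²)` there. The stencil
`(-1, 9, 9, -1) / 16` only spreads such a dipole over `m - 2, …, m + 2`, with weights
`(-1/16, 5/8, 0, -5/8, 1/16)` by antisymmetry.
-/

lemma interp_eq_of_dipole {R Rint : ℤ → ℝ}
    (hRint : ∀ i : ℤ, Rint i = (-R (i - 2) + 9 * R (i - 1) + 9 * R i - R (i + 1)) / 16)
    {m : ℤ} {a : ℝ} (hR₁ : R (m - 1) = a) (hR₂ : R m = -a)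
    (hR₀ : ∀ k : ℤ, k ≠ m - 1 → k ≠ m → R k = 0) :
    Rint m = 0 ∧ Rint (m - 1) = 5 * a / 8 ∧ Rint (m + 1) = -(5 * a / 8) ∧
      Rint (m - 2) = -(a / 16) ∧ Rint (m + 2) = a / 16 ∧
      ∀ j : ℤ, 3 ≤ |j - m| → Rint j = 0 := by
  have hR : ∀ k : ℤ, R k = if k = m - 1 then a else if k = m then -a else 0 := by
    intro k
    split_ifs with h₁ h₂
    · rw [h₁, hR₁]
    · rw [h₂, hR₂]
    · exact hR₀ k h₁ h₂
  simp only [le_abs]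
  refine ⟨?_, ?_, ?_, ?_, ?_, fun j hj => ?_⟩
  all_goals
    simp only [hRint, hR]
    split_ifs <;> first | omega | ring

section StepProfile

variable {u : ℤ → ℝ} {m : ℤ} {V₁ V₂ : ℝ}

lemma firstDiff_of_step {d : ℤ → ℝ} {h : ℝ} (hd : ∀ k : ℤ, d k = (u (k + 1) - u k) / h)
    (hu₁ : ∀ j : ℤ, j ≤ m - 1 → u j = V₁) (hum : u m = (V₁ + V₂) / 2)
    (hu₂ : ∀ j : ℤ, m + 1 ≤ j → u j = V₂) :
    d (m - 1) = (V₂ - V₁) / (2 * h) ∧ d m = (V₂ - V₁) / (2 * h) ∧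
      ∀ k : ℤ, k ≠ m - 1 → k ≠ m → d k = 0 := by
  refine ⟨?_, ?_, fun k hk₁ hk₂ => ?_⟩
  · rw [hd, sub_add_cancel, hum, hu₁ (m - 1) le_rfl]
    ring
  · rw [hd, hu₂ (m + 1) le_rfl, hum]
    ring
  · rcases lt_or_gt_of_ne hk₁ with hk | hk
    · rw [hd, hu₁ (k + 1) (by omega), hu₁ k (by omega), sub_self, zero_div]
    · rw [hd, hu₂ (k + 1) (by omega), hu₂ k (by omega), sub_self, zero_div]

lemma secondDiff_of_step {s : ℤ → ℝ} {h : ℝ}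
    (hs : ∀ k : ℤ, s k = (u (k - 1) - u k - u (k + 1) + u (k + 2)) / (2 * h ^ 2))
    (hu₁ : ∀ j : ℤ, j ≤ m - 1 → u j = V₁) (hum : u m = (V₁ + V₂) / 2)
    (hu₂ : ∀ j : ℤ, m + 1 ≤ j → u j = V₂) :
    s (m - 1) = (V₂ - V₁) / (4 * h ^ 2) ∧ s m = -((V₂ - V₁) / (4 * h ^ 2)) := by
  constructor
  · rw [hs, show m - 1 - 1 = m - 2 by ring, sub_add_cancel, show m - 1 + 2 = m + 1 by ring,
      hu₁ (m - 2) (by omega), hu₁ (m - 1) le_rfl, hum, hu₂ (m + 1) le_rfl]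
    ring
  · rw [hs, hu₁ (m - 1) le_rfl, hum, hu₂ (m + 1) le_rfl, hu₂ (m + 2) (by omega)]
    ring

end StepProfile

theorem stmt_7_general (h γ : ℝ)
    (u d s R Rint Tu : ℤ → ℝ)
    (hd : ∀ k : ℤ, d k = (u (k + 1) - u k) / h)
    (hs : ∀ k : ℤ, s k = (u (k - 1) - u k - u (k + 1) + u (k + 2)) / (2 * h ^ 2))
    (hR : ∀ k : ℤ, R k = Real.sqrt ((d k) ^ 2 / (1 + (d k) ^ 2)) * s k)
    (hRint : ∀ i : ℤ, Rint i = (-R (i - 2) + 9 * R (i - 1) + 9 * R i - R (i + 1)) / 16)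
    (hT : ∀ i : ℤ, Tu i = u i + γ * Rint i)
    (m : ℤ) (V₁ V₂ : ℝ)
    (hu₁ : ∀ j : ℤ, j ≤ m - 1 → u j = V₁)
    (hum : u m = (V₁ + V₂) / 2)
    (hu₂ : ∀ j : ℤ, m + 1 ≤ j → u j = V₂)
    (δ q c : ℝ)
    (hδ : δ = V₂ - V₁) (hq : q = δ / (2 * h))
    (hc : c = Real.sqrt (q ^ 2 / (1 + q ^ 2))) :
    Tu m = u m ∧
    Tu (m - 1) = V₁ + 5 * γ * c * δ / (32 * h ^ 2) ∧
    Tu (m + 1) = V₂ - 5 * γ * c * δ / (32 * h ^ 2) ∧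
    Tu (m - 2) = V₁ - γ * c * δ / (64 * h ^ 2) ∧
    Tu (m + 2) = V₂ + γ * c * δ / (64 * h ^ 2) ∧
    (∀ j : ℤ, 3 ≤ |j - m| → Tu j = u j) := by
  subst hδ hq hc
  obtain ⟨hd₁, hd₂, hd₀⟩ := firstDiff_of_step hd hu₁ hum hu₂
  obtain ⟨hs₁, hs₂⟩ := secondDiff_of_step hs hu₁ hum hu₂
  have hR₀ : ∀ k : ℤ, k ≠ m - 1 → k ≠ m → R k = 0 := fun k hk₁ hk₂ => by
    rw [hR, hd₀ k hk₁ hk₂]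
    simp
  obtain ⟨hI₀, hI₁, hI₂, hI₃, hI₄, hI_far⟩ := interp_eq_of_dipole hRint
    (by rw [hR, hd₁, hs₁]) (by rw [hR, hd₂, hs₂, mul_neg]) hR₀
  refine ⟨?_, ?_, ?_, ?_, ?_, fun j hj => ?_⟩
  · rw [hT, hI₀, mul_zero, add_zero]
  · rw [hT, hI₁, hu₁ (m - 1) le_rfl]
    ring
  · rw [hT, hI₂, hu₂ (m + 1) le_rfl]
    ring
  · rw [hT, hI₃, hu₁ (m - 2) (by omega)]
    ring
  · rw [hT, hI₄, hu₂ (m + 2) (by omega)]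
    ring
  · rw [hT, hI_far j hj, mul_zero, add_zero]

/-- Exact one-step transformation of a step image with an intermediate value at
the jump: the centre point is unchanged, the two neighbouring pairs of points
move by exactly 5γcδ/(32h²) and γcδ/(64h²) respectively, and all points at
distance at least 3 from the jump are unchanged. -/
theorem stmt_7 (h γ : ℝ) (hh : 0 < h)
    (u d s R Rint Tu : ℤ → ℝ)
    (hd : ∀ k : ℤ, d k = (u (k + 1) - u k) / h)
    (hs : ∀ k : ℤ, s k = (u (k - 1) - u k - u (k + 1) + u (k + 2)) / (2 * h ^ 2))
    (hR : ∀ k : ℤ, R k = Real.sqrt ((d k) ^ 2 / (1 + (d k) ^ 2)) * s k)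
    (hRint : ∀ i : ℤ, Rint i = (-R (i - 2) + 9 * R (i - 1) + 9 * R i - R (i + 1)) / 16)
    (hT : ∀ i : ℤ, Tu i = u i + γ * Rint i)
    (m : ℤ) (V₁ V₂ : ℝ) (hV : V₁ ≠ V₂)
    (hu₁ : ∀ j : ℤ, j ≤ m - 1 → u j = V₁)
    (hum : u m = (V₁ + V₂) / 2)
    (hu₂ : ∀ j : ℤ, m + 1 ≤ j → u j = V₂)
    (δ q c : ℝ)
    (hδ : δ = V₂ - V₁) (hq : q = δ / (2 * h))
    (hc : c = Real.sqrt (q ^ 2 / (1 + q ^ 2))) :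
    Tu m = u m ∧
    Tu (m - 1) = V₁ + 5 * γ * c * δ / (32 * h ^ 2) ∧
    Tu (m + 1) = V₂ - 5 * γ * c * δ / (32 * h ^ 2) ∧
    Tu (m - 2) = V₁ - γ * c * δ / (64 * h ^ 2) ∧
    Tu (m + 2) = V₂ + γ * c * δ / (64 * h ^ 2) ∧
    (∀ j : ℤ, 3 ≤ |j - m| → Tu j = u j) :=
  stmt_7_general h γ u d s R Rint Tu hd hs hR hRint hT m V₁ V₂ hu₁ hum hu₂ δ q c hδ hq hc
end

section
/- Let m ∈ ℤ, V₁ > V₂, and let u : ℤ → ℝ be defined by u(j) = V₁ for j ≤ m − 1, u(m) = (V₁ + V₂)/2, and u(j) = V₂ for j ≥ m + 1. If γ < 0, then after one step of the algorithm the jump is emphasized: (Tu)(m−1) > V₁ and (Tu)(m+1) < V₂. If instead γ > 0, the jump is smoothed: (Tu)(m−1) < V₁ and (Tu)(m+1) > V₂. -/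
/-!
Across the step only the two half-integer points `m - 1/2` and `m + 1/2` see a nonzero
first difference, and there the first differences agree while the second differences are
opposite, so `R (m - 1) = -R m` with `R m > 0`, and `R` vanishes elsewhere. The four-point
interpolation then gives `Rint (m - 1) = -(5/8) R m` and `Rint (m + 1) = (5/8) R m`, so the
sign of `γ` decides whether the two plateaus move apart or towards each other.
-/

namespace AnisotropicStep

variable (h : ℝ) (u : ℤ → ℝ)

noncomputable def stagDiff (k : ℤ) : ℝ := (u (k + 1) - u k) / h

noncomputable def stagSecondDiff (k : ℤ) : ℝ :=
  (u (k - 1) - u k - u (k + 1) + u (k + 2)) / (2 * h ^ 2)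

noncomputable def anisoTerm (k : ℤ) : ℝ :=
  Real.sqrt (stagDiff h u k ^ 2 / (1 + stagDiff h u k ^ 2)) * stagSecondDiff h u k

noncomputable def fourPointInterp (R : ℤ → ℝ) (i : ℤ) : ℝ :=
  (-R (i - 2) + 9 * R (i - 1) + 9 * R i - R (i + 1)) / 16

variable {h u}

theorem anisoTerm_eq_zero_of_eq {k : ℤ} (hk : u (k + 1) = u k) : anisoTerm h u k = 0 := by
  simp [anisoTerm, stagDiff, hk]

theorem sqrt_sq_div_one_add_sq_pos {x : ℝ} (hx : x ≠ 0) : 0 < Real.sqrt (x ^ 2 / (1 + x ^ 2)) :=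
  Real.sqrt_pos.2 (by positivity)

section Step

variable {m : ℤ} {V₁ V₂ : ℝ}
  (hu₁ : ∀ j : ℤ, j ≤ m - 1 → u j = V₁) (hum : u m = (V₁ + V₂) / 2)
  (hu₂ : ∀ j : ℤ, m + 1 ≤ j → u j = V₂)
include hu₁ hum hu₂

theorem stagDiff_sub_one_of_step : stagDiff h u (m - 1) = stagDiff h u m := by
  simp only [stagDiff, sub_add_cancel, hum, hu₁ (m - 1) le_rfl, hu₂ (m + 1) le_rfl]
  ring

theorem stagSecondDiff_sub_one_of_step :
    stagSecondDiff h u (m - 1) = -stagSecondDiff h u m := by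
  simp only [stagSecondDiff, sub_add_cancel, hum, hu₁ (m - 1) le_rfl,
    hu₁ (m - 1 - 1) (by omega), hu₂ (m + 1) le_rfl,
    hu₂ (m - 1 + 2) (by omega), hu₂ (m + 2) (by omega)]
  ring

theorem anisoTerm_sub_one_of_step : anisoTerm h u (m - 1) = -anisoTerm h u m := by
  rw [anisoTerm, anisoTerm, stagDiff_sub_one_of_step hu₁ hum hu₂,
    stagSecondDiff_sub_one_of_step hu₁ hum hu₂, mul_neg]

theorem anisoTerm_pos_of_step (hh : h ≠ 0) (hV : V₂ < V₁) : 0 < anisoTerm h u m := by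
  have hdiff : stagDiff h u m = (V₂ - V₁) / (2 * h) := by
    rw [stagDiff, hum, hu₂ (m + 1) le_rfl]
    field_simp
    ring
  have hsecond : stagSecondDiff h u m = (V₁ - V₂) / (4 * h ^ 2) := by
    rw [stagSecondDiff, hum, hu₁ (m - 1) le_rfl, hu₂ (m + 1) le_rfl, hu₂ (m + 2) (by omega)]
    field_simp
    ring
  rw [anisoTerm, hdiff, hsecond]
  exact mul_pos (sqrt_sq_div_one_add_sq_pos (div_ne_zero (by linarith) (by positivity)))
    (div_pos (by linarith) (by positivity))

theorem fourPointInterp_sub_one_of_step :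
    fourPointInterp (anisoTerm h u) (m - 1) = -(5 / 8) * anisoTerm h u m := by
  have h₃ : anisoTerm h u (m - 1 - 2) = 0 :=
    anisoTerm_eq_zero_of_eq (by rw [hu₁ _ (by omega), hu₁ _ (by omega)])
  have h₂ : anisoTerm h u (m - 1 - 1) = 0 :=
    anisoTerm_eq_zero_of_eq (by rw [hu₁ _ (by omega), hu₁ _ (by omega)])
  rw [fourPointInterp, h₃, h₂, sub_add_cancel, anisoTerm_sub_one_of_step hu₁ hum hu₂]
  ring

theorem fourPointInterp_add_one_of_step :
    fourPointInterp (anisoTerm h u) (m + 1) = (5 / 8) * anisoTerm h u m := by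
  have h₁ : anisoTerm h u (m + 1) = 0 :=
    anisoTerm_eq_zero_of_eq (by rw [hu₂ _ (by omega), hu₂ _ (by omega)])
  have h₂ : anisoTerm h u (m + 1 + 1) = 0 :=
    anisoTerm_eq_zero_of_eq (by rw [hu₂ _ (by omega), hu₂ _ (by omega)])
  rw [fourPointInterp, show m + 1 - 2 = m - 1 by ring, add_sub_cancel_right, h₁, h₂,
    anisoTerm_sub_one_of_step hu₁ hum hu₂]
  ring

end Step

end AnisotropicStep

open AnisotropicStep in
/-- For a descending step image with an intermediate value at the jump
(V₁ > V₂): with γ < 0 one step of the algorithm emphasizes the jump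
(Tu(m−1) > V₁ and Tu(m+1) < V₂), while with γ > 0 it smooths the jump
(Tu(m−1) < V₁ and Tu(m+1) > V₂). -/
theorem stmt_8 (h γ : ℝ) (hh : 0 < h)
    (u d s R Rint Tu : ℤ → ℝ)
    (hd : ∀ k : ℤ, d k = (u (k + 1) - u k) / h)
    (hs : ∀ k : ℤ, s k = (u (k - 1) - u k - u (k + 1) + u (k + 2)) / (2 * h ^ 2))
    (hR : ∀ k : ℤ, R k = Real.sqrt ((d k) ^ 2 / (1 + (d k) ^ 2)) * s k)
    (hRint : ∀ i : ℤ, Rint i = (-R (i - 2) + 9 * R (i - 1) + 9 * R i - R (i + 1)) / 16)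
    (hT : ∀ i : ℤ, Tu i = u i + γ * Rint i)
    (m : ℤ) (V₁ V₂ : ℝ) (hV : V₁ > V₂)
    (hu₁ : ∀ j : ℤ, j ≤ m - 1 → u j = V₁)
    (hum : u m = (V₁ + V₂) / 2)
    (hu₂ : ∀ j : ℤ, m + 1 ≤ j → u j = V₂) :
    (γ < 0 → Tu (m - 1) > V₁ ∧ Tu (m + 1) < V₂) ∧
    (γ > 0 → Tu (m - 1) < V₁ ∧ Tu (m + 1) > V₂) := by
  obtain rfl : d = stagDiff h u := funext hd
  obtain rfl : s = stagSecondDiff h u := funext hs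
  obtain rfl : R = anisoTerm h u := funext hR
  obtain rfl : Rint = fourPointInterp (anisoTerm h u) := funext hRint
  have hpos := anisoTerm_pos_of_step hu₁ hum hu₂ hh.ne' hV
  have hleft : Tu (m - 1) = V₁ - 5 / 8 * (γ * anisoTerm h u m) := by
    rw [hT, hu₁ _ le_rfl, fourPointInterp_sub_one_of_step hu₁ hum hu₂]
    ring
  have hright : Tu (m + 1) = V₂ + 5 / 8 * (γ * anisoTerm h u m) := by
    rw [hT, hu₂ _ le_rfl, fourPointInterp_add_one_of_step hu₁ hum hu₂]
    ring
  refine ⟨fun hγ => ?_, fun hγ => ?_⟩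
  · have := mul_neg_of_neg_of_pos hγ hpos
    constructor <;> linarith
  · have := mul_pos hγ hpos
    constructor <;> linarith
end

section
/- Let m ∈ ℤ, V, W ∈ ℝ with W ≠ V, and let u : ℤ → ℝ be defined by u(m) = W and u(j) = V for all j ≠ m (an isolated single-pixel deviation). Set q = (W − V)/h and c = √(q²/(1 + q²)). Then one step of the algorithm gives (Tu)(m) = V + (W − V)·(1 − 9γc/(16h²)). In particular, if γ < 0 the deviation is amplified: |(Tu)(m) − V| > |W − V|. -/
/-!
Around an isolated pixel the only nonzero anisotropic quantities are the two adjacent to it,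
`R (m - 1)` and `R m`: every other half-integer point sees a flat pair of neighbours, where the
edge weight `√(d² / (1 + d²))` vanishes. Both equal `c (V - W) / (2h²)`, so the four-point
interpolation at `m` keeps only the weights `9/16` and `Tu m` is an explicit affine function of
`W - V`. For `γ < 0` its factor exceeds `1`, which amplifies the deviation.
-/

noncomputable section

namespace PixelDeviation

def slope (h : ℝ) (u : ℤ → ℝ) (k : ℤ) : ℝ := (u (k + 1) - u k) / h

def curvature (h : ℝ) (u : ℤ → ℝ) (k : ℤ) : ℝ :=
  (u (k - 1) - u k - u (k + 1) + u (k + 2)) / (2 * h ^ 2)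

def edgeWeight (x : ℝ) : ℝ := √(x ^ 2 / (1 + x ^ 2))

def anisoFlux (h : ℝ) (u : ℤ → ℝ) (k : ℤ) : ℝ := edgeWeight (slope h u k) * curvature h u k

def cubicMidpoint (R : ℤ → ℝ) (i : ℤ) : ℝ :=
  (-R (i - 2) + 9 * R (i - 1) + 9 * R i - R (i + 1)) / 16

@[simp]
lemma edgeWeight_zero : edgeWeight 0 = 0 := by simp [edgeWeight]

@[simp]
lemma edgeWeight_neg (x : ℝ) : edgeWeight (-x) = edgeWeight x := by simp [edgeWeight]

lemma edgeWeight_pos {x : ℝ} (hx : x ≠ 0) : 0 < edgeWeight x :=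
  Real.sqrt_pos.mpr (by positivity)

lemma anisoFlux_eq_zero_of_flat {h : ℝ} {u : ℤ → ℝ} {k : ℤ} (hflat : u (k + 1) = u k) :
    anisoFlux h u k = 0 := by
  simp [anisoFlux, slope, hflat]

section Spike

variable {h : ℝ} {u : ℤ → ℝ} {m : ℤ} {V W : ℝ}

lemma anisoFlux_spike_sub_one (hum : u m = W) (huj : ∀ j : ℤ, j ≠ m → u j = V) :
    anisoFlux h u (m - 1) = edgeWeight ((W - V) / h) * ((V - W) / (2 * h ^ 2)) := by
  simp only [anisoFlux, slope, curvature, sub_add_cancel,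
    show m - 1 - 1 = m - 2 by ring, show m - 1 + 2 = m + 1 by ring, hum,
    huj (m - 1) (by omega), huj (m - 2) (by omega), huj (m + 1) (by omega)]
  ring_nf

lemma anisoFlux_spike (hum : u m = W) (huj : ∀ j : ℤ, j ≠ m → u j = V) :
    anisoFlux h u m = edgeWeight ((W - V) / h) * ((V - W) / (2 * h ^ 2)) := by
  simp only [anisoFlux, slope, curvature, hum,
    huj (m - 1) (by omega), huj (m + 1) (by omega), huj (m + 2) (by omega)]
  rw [← edgeWeight_neg]
  ring_nf

lemma cubicMidpoint_anisoFlux_spike (hum : u m = W) (huj : ∀ j : ℤ, j ≠ m → u j = V) :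
    cubicMidpoint (anisoFlux h u) m =
      -(9 * edgeWeight ((W - V) / h) * (W - V) / (16 * h ^ 2)) := by
  have hleft : anisoFlux h u (m - 2) = 0 := anisoFlux_eq_zero_of_flat <| by
    rw [show m - 2 + 1 = m - 1 by ring, huj (m - 1) (by omega), huj (m - 2) (by omega)]
  have hright : anisoFlux h u (m + 1) = 0 := anisoFlux_eq_zero_of_flat <| by
    rw [huj (m + 1 + 1) (by omega), huj (m + 1) (by omega)]
  rw [cubicMidpoint, hleft, hright, anisoFlux_spike_sub_one hum huj, anisoFlux_spike hum huj]
  by_cases hh : h = 0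
  · simp [hh]
  · field_simp
    ring

end Spike

end PixelDeviation

end

open PixelDeviation in
/-- For an isolated single-pixel deviation (u(m) = W, u(j) = V for j ≠ m),
one step of the algorithm gives exactly
Tu(m) = V + (W − V)·(1 − 9γc/(16h²)), with c = √(q²/(1+q²)), q = (W − V)/h;
in particular, for γ < 0 the deviation is amplified. -/
theorem stmt_9 (h γ : ℝ) (hh : 0 < h)
    (u d s R Rint Tu : ℤ → ℝ)
    (hd : ∀ k : ℤ, d k = (u (k + 1) - u k) / h)
    (hs : ∀ k : ℤ, s k = (u (k - 1) - u k - u (k + 1) + u (k + 2)) / (2 * h ^ 2))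
    (hR : ∀ k : ℤ, R k = Real.sqrt ((d k) ^ 2 / (1 + (d k) ^ 2)) * s k)
    (hRint : ∀ i : ℤ, Rint i = (-R (i - 2) + 9 * R (i - 1) + 9 * R i - R (i + 1)) / 16)
    (hT : ∀ i : ℤ, Tu i = u i + γ * Rint i)
    (m : ℤ) (V W : ℝ) (hVW : W ≠ V)
    (hum : u m = W) (huj : ∀ j : ℤ, j ≠ m → u j = V)
    (q c : ℝ) (hq : q = (W - V) / h) (hc : c = Real.sqrt (q ^ 2 / (1 + q ^ 2))) :
    Tu m = V + (W - V) * (1 - 9 * γ * c / (16 * h ^ 2)) ∧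
    (γ < 0 → |Tu m - V| > |W - V|) := by
  have hRflux : R = anisoFlux h u := funext fun k => by
    rw [hR, hd, hs]; rfl
  have hc' : c = edgeWeight ((W - V) / h) := by rw [hc, hq]; rfl
  have hTu : Tu m = V + (W - V) * (1 - 9 * γ * c / (16 * h ^ 2)) := by
    have hmid : Rint m = cubicMidpoint (anisoFlux h u) m := by rw [hRint, hRflux]; rfl
    rw [hT, hmid, cubicMidpoint_anisoFlux_spike hum huj, hum, hc']
    ring
  refine ⟨hTu, fun hγ => ?_⟩
  have hcpos : 0 < c := hc' ▸ edgeWeight_pos (div_ne_zero (sub_ne_zero.mpr hVW) hh.ne')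
  have hgain : 1 < 1 - 9 * γ * c / (16 * h ^ 2) := by
    have : 9 * γ * c / (16 * h ^ 2) < 0 :=
      div_neg_of_neg_of_pos (by nlinarith) (by positivity)
    linarith
  rw [hTu, add_sub_cancel_left, abs_mul, abs_of_pos (zero_lt_one.trans hgain)]
  exact lt_mul_of_one_lt_right (abs_pos.mpr (sub_ne_zero.mpr hVW)) hgain
end

section
/- Let V₁, V₂ ∈ ℝ and let u : ℤ×ℤ → ℝ be the checkerboard image u(i,j) = V₁ if i + j is even and u(i,j) = V₂ if i + j is odd. Then d^x(i,j) = 0 and d^y(i,j) = 0 for all (i,j) ∈ ℤ², hence R(i,j) = 0 for all (i,j), and consequently (Tu)(i,j) = u(i,j) for every (i,j) and every γ ∈ ℝ: the checkerboard image is invariant under the two-dimensional algorithm. -/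
/-!
On a checkerboard the value at a pixel depends only on the parity of `i + j`. Each staggered
difference `d^x`, `d^y` pairs its four pixels into two pairs of equal parity with opposite signs,
so both vanish identically; the Laplacian, `R`, its interpolant and hence the update term vanish
with them.
-/

theorem checkerboard_congr {α : Type*} {u : ℤ → ℤ → α} {V₁ V₂ : α}
    (hu : ∀ i j : ℤ, u i j = if Even (i + j) then V₁ else V₂) {a b c d : ℤ}
    (h : Even (a + b - (c + d))) : u a b = u c d := by
  rw [hu, hu, if_congr (Int.even_sub.mp h) rfl rfl]

theorem checkerboard_staggered_diff_eq_zero {u : ℤ → ℤ → ℝ} {V₁ V₂ : ℝ}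
    (hu : ∀ i j : ℤ, u i j = if Even (i + j) then V₁ else V₂) (i j : ℤ) :
    u (i + 2) (j + 1) + u (i + 2) (j + 2) - u (i + 1) (j + 1) - u (i + 1) (j + 2) = 0 := by
  rw [checkerboard_congr hu (a := i + 2) (b := j + 1) (c := i + 1) (d := j + 2) ⟨0, by ring⟩,
    checkerboard_congr hu (a := i + 2) (b := j + 2) (c := i + 1) (d := j + 1) ⟨1, by ring⟩]
  ring

theorem stmt_10_general (h γ : ℝ)
    (u dx dy D l R Rint Tu : ℤ → ℤ → ℝ)
    (hdx : ∀ i j : ℤ, dx i j =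
      (u (i + 2) (j + 1) + u (i + 2) (j + 2) - u (i + 1) (j + 1) - u (i + 1) (j + 2))
        / (2 * h))
    (hdy : ∀ i j : ℤ, dy i j =
      (u (i + 1) (j + 2) + u (i + 2) (j + 2) - u (i + 1) (j + 1) - u (i + 2) (j + 1))
        / (2 * h))
    (hl : ∀ i j : ℤ, l i j =
      (dx (i + 1) j - dx (i - 1) j + dy i (j + 1) - dy i (j - 1)) / (2 * h))
    (hR : ∀ i j : ℤ, R i j = Real.sqrt ((D i j) ^ 2 / (1 + (D i j) ^ 2)) * l i j)
    (hRint : ∀ i j : ℤ, Rint i j = (1 / 256) *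
      (R (i - 2) (j - 2) - 9 * R (i - 2) (j - 1) - 9 * R (i - 2) j + R (i - 2) (j + 1)
        - 9 * R (i - 1) (j - 2) + 81 * R (i - 1) (j - 1) + 81 * R (i - 1) j
        - 9 * R (i - 1) (j + 1)
        - 9 * R i (j - 2) + 81 * R i (j - 1) + 81 * R i j - 9 * R i (j + 1)
        + R (i + 1) (j - 2) - 9 * R (i + 1) (j - 1) - 9 * R (i + 1) j
        + R (i + 1) (j + 1)))
    (hT : ∀ i j : ℤ, Tu i j = u i j + γ * Rint i j)
    (V₁ V₂ : ℝ)
    (hu : ∀ i j : ℤ, u i j = if Even (i + j) then V₁ else V₂) :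
    (∀ i j : ℤ, dx i j = 0) ∧ (∀ i j : ℤ, dy i j = 0) ∧
    (∀ i j : ℤ, R i j = 0) ∧ (∀ i j : ℤ, Tu i j = u i j) := by
  have hdx0 (i j : ℤ) : dx i j = 0 := by
    rw [hdx, checkerboard_staggered_diff_eq_zero hu, zero_div]
  have hdy0 (i j : ℤ) : dy i j = 0 := by
    -- `d^y` is `d^x` of the transposed image, which is again a checkerboard.
    have hut (i j : ℤ) : u j i = if Even (i + j) then V₁ else V₂ := by rw [hu, add_comm]
    have h0 := checkerboard_staggered_diff_eq_zero (u := fun i j => u j i) hut j i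
    rw [hdy, div_eq_zero_iff]
    left
    linarith
  have hR0 (i j : ℤ) : R i j = 0 := by
    rw [hR, hl, hdx0, hdx0, hdy0, hdy0]
    ring
  refine ⟨hdx0, hdy0, hR0, fun i j => ?_⟩
  rw [hT, hRint]
  simp only [hR0]
  ring

/-- The checkerboard image (value V₁ when i+j is even, V₂ when i+j is odd) is
invariant under the two-dimensional algorithm: both staggered first differences
vanish everywhere, hence all quantities R vanish and the one-step update leaves
the image unchanged, whatever the parameter γ is. -/
theorem stmt_10 (h γ : ℝ) (hh : 0 < h)
    (u dx dy D l R Rint Tu : ℤ → ℤ → ℝ)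
    (hdx : ∀ i j : ℤ, dx i j =
      (u (i + 2) (j + 1) + u (i + 2) (j + 2) - u (i + 1) (j + 1) - u (i + 1) (j + 2))
        / (2 * h))
    (hdy : ∀ i j : ℤ, dy i j =
      (u (i + 1) (j + 2) + u (i + 2) (j + 2) - u (i + 1) (j + 1) - u (i + 2) (j + 1))
        / (2 * h))
    (hD : ∀ i j : ℤ, D i j = Real.sqrt ((dx i j) ^ 2 + (dy i j) ^ 2))
    (hl : ∀ i j : ℤ, l i j =
      (dx (i + 1) j - dx (i - 1) j + dy i (j + 1) - dy i (j - 1)) / (2 * h))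
    (hR : ∀ i j : ℤ, R i j = Real.sqrt ((D i j) ^ 2 / (1 + (D i j) ^ 2)) * l i j)
    (hRint : ∀ i j : ℤ, Rint i j = (1 / 256) *
      (R (i - 2) (j - 2) - 9 * R (i - 2) (j - 1) - 9 * R (i - 2) j + R (i - 2) (j + 1)
        - 9 * R (i - 1) (j - 2) + 81 * R (i - 1) (j - 1) + 81 * R (i - 1) j
        - 9 * R (i - 1) (j + 1)
        - 9 * R i (j - 2) + 81 * R i (j - 1) + 81 * R i j - 9 * R i (j + 1)
        + R (i + 1) (j - 2) - 9 * R (i + 1) (j - 1) - 9 * R (i + 1) j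
        + R (i + 1) (j + 1)))
    (hT : ∀ i j : ℤ, Tu i j = u i j + γ * Rint i j)
    (V₁ V₂ : ℝ)
    (hu : ∀ i j : ℤ, u i j = if Even (i + j) then V₁ else V₂) :
    (∀ i j : ℤ, dx i j = 0) ∧ (∀ i j : ℤ, dy i j = 0) ∧
    (∀ i j : ℤ, R i j = 0) ∧ (∀ i j : ℤ, Tu i j = u i j) :=
  stmt_10_general h γ u dx dy D l R Rint Tu hdx hdy hl hR hRint hT V₁ V₂ hu
end

section
/- Let m ∈ ℤ, V₁, V₂ ∈ ℝ, and let u : ℤ×ℤ → ℝ be the axis-aligned step image u(i,j) = V₁ if i ≤ m and u(i,j) = V₂ if i > m. Then R(i,j) = 0 for all (i,j) ∈ ℤ², and consequently (Tu)(i,j) = u(i,j) for every (i,j) and every γ ∈ ℝ: a sharp straight edge aligned with the grid axes is exactly preserved by the two-dimensional algorithm, with no diffusion introduced despite the presence of the discrete Laplace operator. -/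
/-!
The step image is constant along columns, so the vertical differences `dy` vanish and the
horizontal differences `dx` are supported on the single column `i = m - 1`, the one straddling
the edge. Off that column `D = 0`. On it, the Laplacian is a centred difference of stride two,
so it only sees `dx` on the columns `m - 2` and `m`, where it vanishes. Hence every `R i j` has
a zero factor, and so do its interpolants.
-/

theorem step_add_one_eq {α : Type*} {m i : ℤ} (a b : α) (hi : i ≠ m) :
    (if i + 1 ≤ m then a else b) = if i ≤ m then a else b :=
  if_congr (by omega) rfl rfl

section ColumnProfile

variable {h : ℝ} {f : ℤ → ℝ} {u dx dy : ℤ → ℤ → ℝ}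

theorem dy_eq_zero_of_column_profile (hu : ∀ i j, u i j = f i)
    (hdy : ∀ i j : ℤ, dy i j =
      (u (i + 1) (j + 2) + u (i + 2) (j + 2) - u (i + 1) (j + 1) - u (i + 2) (j + 1))
        / (2 * h))
    (i j : ℤ) : dy i j = 0 := by
  rw [hdy, hu, hu, hu, hu]
  ring

theorem dx_eq_zero_of_column_profile (hu : ∀ i j, u i j = f i)
    (hdx : ∀ i j : ℤ, dx i j =
      (u (i + 2) (j + 1) + u (i + 2) (j + 2) - u (i + 1) (j + 1) - u (i + 1) (j + 2))
        / (2 * h))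
    {i : ℤ} (hf : f (i + 2) = f (i + 1)) (j : ℤ) : dx i j = 0 := by
  rw [hdx, hu, hu, hu, hu, hf]
  ring

end ColumnProfile

theorem sqrt_sq_div_one_add_sq_mul_eq_zero {D l : ℝ} (h : D = 0 ∨ l = 0) :
    √(D ^ 2 / (1 + D ^ 2)) * l = 0 := by
  rcases h with rfl | rfl <;> simp

theorem stmt_13_general (h γ : ℝ)
    (u dx dy D l R Rint Tu : ℤ → ℤ → ℝ)
    (hdx : ∀ i j : ℤ, dx i j =
      (u (i + 2) (j + 1) + u (i + 2) (j + 2) - u (i + 1) (j + 1) - u (i + 1) (j + 2))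
        / (2 * h))
    (hdy : ∀ i j : ℤ, dy i j =
      (u (i + 1) (j + 2) + u (i + 2) (j + 2) - u (i + 1) (j + 1) - u (i + 2) (j + 1))
        / (2 * h))
    (hD : ∀ i j : ℤ, D i j = Real.sqrt ((dx i j) ^ 2 + (dy i j) ^ 2))
    (hl : ∀ i j : ℤ, l i j =
      (dx (i + 1) j - dx (i - 1) j + dy i (j + 1) - dy i (j - 1)) / (2 * h))
    (hR : ∀ i j : ℤ, R i j = Real.sqrt ((D i j) ^ 2 / (1 + (D i j) ^ 2)) * l i j)
    (hRint : ∀ i j : ℤ, Rint i j = (1 / 256) *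
      (R (i - 2) (j - 2) - 9 * R (i - 2) (j - 1) - 9 * R (i - 2) j + R (i - 2) (j + 1)
        - 9 * R (i - 1) (j - 2) + 81 * R (i - 1) (j - 1) + 81 * R (i - 1) j
        - 9 * R (i - 1) (j + 1)
        - 9 * R i (j - 2) + 81 * R i (j - 1) + 81 * R i j - 9 * R i (j + 1)
        + R (i + 1) (j - 2) - 9 * R (i + 1) (j - 1) - 9 * R (i + 1) j
        + R (i + 1) (j + 1)))
    (hT : ∀ i j : ℤ, Tu i j = u i j + γ * Rint i j)
    (m : ℤ) (V₁ V₂ : ℝ)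
    (hu : ∀ i j : ℤ, u i j = if i ≤ m then V₁ else V₂) :
    (∀ i j : ℤ, R i j = 0) ∧ (∀ i j : ℤ, Tu i j = u i j) := by
  have hdy0 := dy_eq_zero_of_column_profile hu hdy
  have hdx0 (i j : ℤ) (hi : i ≠ m - 1) : dx i j = 0 :=
    dx_eq_zero_of_column_profile hu hdx
      (by rw [show i + 2 = i + 1 + 1 by ring]; exact step_add_one_eq V₁ V₂ (by omega)) j
  have hR0 (i j : ℤ) : R i j = 0 := by
    rw [hR]
    apply sqrt_sq_div_one_add_sq_mul_eq_zero
    by_cases hi : i = m - 1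
    · right
      rw [hl, hdx0 _ _ (by omega), hdx0 _ _ (by omega), hdy0, hdy0]
      simp
    · left
      rw [hD, hdx0 _ _ hi, hdy0]
      simp
  refine ⟨hR0, fun i j => ?_⟩
  rw [hT, hRint]
  simp [hR0]

/-- A sharp straight edge aligned with the grid axes (u(i,j) = V₁ for i ≤ m,
u(i,j) = V₂ for i > m) is exactly preserved by the two-dimensional algorithm:
all quantities R vanish and the one-step update leaves the image unchanged,
whatever the parameter γ is. -/
theorem stmt_13 (h γ : ℝ) (hh : 0 < h)
    (u dx dy D l R Rint Tu : ℤ → ℤ → ℝ)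
    (hdx : ∀ i j : ℤ, dx i j =
      (u (i + 2) (j + 1) + u (i + 2) (j + 2) - u (i + 1) (j + 1) - u (i + 1) (j + 2))
        / (2 * h))
    (hdy : ∀ i j : ℤ, dy i j =
      (u (i + 1) (j + 2) + u (i + 2) (j + 2) - u (i + 1) (j + 1) - u (i + 2) (j + 1))
        / (2 * h))
    (hD : ∀ i j : ℤ, D i j = Real.sqrt ((dx i j) ^ 2 + (dy i j) ^ 2))
    (hl : ∀ i j : ℤ, l i j =
      (dx (i + 1) j - dx (i - 1) j + dy i (j + 1) - dy i (j - 1)) / (2 * h))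
    (hR : ∀ i j : ℤ, R i j = Real.sqrt ((D i j) ^ 2 / (1 + (D i j) ^ 2)) * l i j)
    (hRint : ∀ i j : ℤ, Rint i j = (1 / 256) *
      (R (i - 2) (j - 2) - 9 * R (i - 2) (j - 1) - 9 * R (i - 2) j + R (i - 2) (j + 1)
        - 9 * R (i - 1) (j - 2) + 81 * R (i - 1) (j - 1) + 81 * R (i - 1) j
        - 9 * R (i - 1) (j + 1)
        - 9 * R i (j - 2) + 81 * R i (j - 1) + 81 * R i j - 9 * R i (j + 1)
        + R (i + 1) (j - 2) - 9 * R (i + 1) (j - 1) - 9 * R (i + 1) j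
        + R (i + 1) (j + 1)))
    (hT : ∀ i j : ℤ, Tu i j = u i j + γ * Rint i j)
    (m : ℤ) (V₁ V₂ : ℝ)
    (hu : ∀ i j : ℤ, u i j = if i ≤ m then V₁ else V₂) :
    (∀ i j : ℤ, R i j = 0) ∧ (∀ i j : ℤ, Tu i j = u i j) :=
  stmt_13_general h γ u dx dy D l R Rint Tu hdx hdy hD hl hR hRint hT m V₁ V₂ hu
end

section
/- Let V₁, V₂ ∈ ℝ with V₁ ≠ V₂, set δ = V₂ − V₁, and let u : ℤ×ℤ → ℝ be the diagonal step image u(i,j) = V₁ if i < j and u(i,j) = V₂ if i ≥ j. Then for every i ∈ ℤ, the staggered quantities on the diagonal satisfy d^x(i,i) = δ/(2h), d^y(i,i) = −δ/(2h), l(i,i) = −δ/(2h²), and hence R(i,i) = −√(D²/(1 + D²)) · δ/(2h²) ≠ 0, where D² = δ²/(2h²). In particular, the diagonal step image is not an invariant of the two-dimensional algorithm: the quantities R do not all vanish. -/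
/-!
The diagonal step image has the form `u i j = f (j - i)`. For such images `d^y = -d^x`, both
are centred differences of `f`, and the Laplacian is a one-dimensional second difference of `f`
with step two. For the step profile that second difference at `0` is `V₁ - V₂ = -δ ≠ 0`, while
`D(i,i)² = 2 d^x(i,i)² = δ²/(2h²) > 0`; hence `R(i,i) ≠ 0`.
-/

open Real

noncomputable section

namespace StaggeredGrid

variable (h : ℝ) (u : ℤ → ℤ → ℝ)

def diffX (i j : ℤ) : ℝ :=
  (u (i + 2) (j + 1) + u (i + 2) (j + 2) - u (i + 1) (j + 1) - u (i + 1) (j + 2)) / (2 * h)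

def diffY (i j : ℤ) : ℝ :=
  (u (i + 1) (j + 2) + u (i + 2) (j + 2) - u (i + 1) (j + 1) - u (i + 2) (j + 1)) / (2 * h)

def lap (i j : ℤ) : ℝ :=
  (diffX h u (i + 1) j - diffX h u (i - 1) j + diffY h u i (j + 1) - diffY h u i (j - 1)) / (2 * h)

variable {h} (f : ℤ → ℝ)

theorem diffX_diagonal (i j : ℤ) :
    diffX h (fun i j => f (j - i)) i j = (f (j - i - 1) - f (j - i + 1)) / (2 * h) := by
  simp only [diffX]
  ring_nf

theorem diffY_diagonal (i j : ℤ) :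
    diffY h (fun i j => f (j - i)) i j = -diffX h (fun i j => f (j - i)) i j := by
  simp only [diffY, diffX_diagonal]
  ring_nf

theorem lap_diagonal (i j : ℤ) :
    lap h (fun i j => f (j - i)) i j =
      (f (j - i + 2) - 2 * f (j - i) + f (j - i - 2)) / (2 * h ^ 2) := by
  simp only [lap, diffY_diagonal, diffX_diagonal]
  ring_nf

end StaggeredGrid

end

open StaggeredGrid

/-- For the diagonal step image (u(i,j) = V₁ if i < j, V₂ if i ≥ j, with
V₁ ≠ V₂ and δ = V₂ − V₁), the staggered quantities on the diagonal satisfy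
d^x(i,i) = δ/(2h), d^y(i,i) = −δ/(2h), l(i,i) = −δ/(2h²), and
R(i,i) = −√(D²/(1+D²))·δ/(2h²) ≠ 0 with D² = δ²/(2h²); hence the diagonal
step image is not an invariant of the two-dimensional algorithm. -/
theorem stmt_14 (h : ℝ) (hh : 0 < h)
    (u dx dy D l R : ℤ → ℤ → ℝ)
    (hdx : ∀ i j : ℤ, dx i j =
      (u (i + 2) (j + 1) + u (i + 2) (j + 2) - u (i + 1) (j + 1) - u (i + 1) (j + 2))
        / (2 * h))
    (hdy : ∀ i j : ℤ, dy i j =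
      (u (i + 1) (j + 2) + u (i + 2) (j + 2) - u (i + 1) (j + 1) - u (i + 2) (j + 1))
        / (2 * h))
    (hD : ∀ i j : ℤ, D i j = Real.sqrt ((dx i j) ^ 2 + (dy i j) ^ 2))
    (hl : ∀ i j : ℤ, l i j =
      (dx (i + 1) j - dx (i - 1) j + dy i (j + 1) - dy i (j - 1)) / (2 * h))
    (hR : ∀ i j : ℤ, R i j = Real.sqrt ((D i j) ^ 2 / (1 + (D i j) ^ 2)) * l i j)
    (V₁ V₂ : ℝ) (hV : V₁ ≠ V₂) (δ : ℝ) (hδ : δ = V₂ - V₁)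
    (hu : ∀ i j : ℤ, u i j = if i < j then V₁ else V₂) :
    ∀ i : ℤ,
      dx i i = δ / (2 * h) ∧
      dy i i = -(δ / (2 * h)) ∧
      l i i = -(δ / (2 * h ^ 2)) ∧
      R i i = -(Real.sqrt ((δ ^ 2 / (2 * h ^ 2)) / (1 + δ ^ 2 / (2 * h ^ 2)))
        * δ / (2 * h ^ 2)) ∧
      R i i ≠ 0 := by
  intro i
  set f : ℤ → ℝ := fun k => if 0 < k then V₁ else V₂
  have hu' : u = fun i j => f (j - i) :=
    funext fun i => funext fun j => by simp only [hu, f, sub_pos]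
  have hdx' : dx = diffX h u := funext fun i => funext fun j => hdx i j
  have hdy' : dy = diffY h u := funext fun i => funext fun j => hdy i j
  have hl' : l = lap h u := funext fun i => funext fun j => by rw [hl, hdx', hdy']; rfl
  have hx : dx i i = δ / (2 * h) := by
    rw [hdx', hu', diffX_diagonal]
    norm_num [f, hδ]
  have hy : dy i i = -(δ / (2 * h)) := by
    rw [← hx, hdx', hdy', hu', diffY_diagonal]
  have hlap : l i i = -(δ / (2 * h ^ 2)) := by
    rw [hl', hu', lap_diagonal]
    norm_num [f, hδ]
    ring
  have hD2 : D i i ^ 2 = δ ^ 2 / (2 * h ^ 2) := by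
    rw [hD, sq_sqrt (by positivity), hx, hy]
    field_simp
    ring
  have hRii : R i i = -(√(δ ^ 2 / (2 * h ^ 2) / (1 + δ ^ 2 / (2 * h ^ 2))) * δ / (2 * h ^ 2)) := by
    rw [hR, hD2, hlap]
    ring
  have hδ0 : δ ≠ 0 := hδ ▸ sub_ne_zero.mpr hV.symm
  refine ⟨hx, hy, hlap, hRii, ?_⟩
  rw [hRii, neg_ne_zero]
  positivity
end

section
/- Let a > 0, h > 0, Δt ≠ 0, let m ∈ ℤ, V₁, V₂ ∈ ℝ with V₁ ≠ V₂, set δ = V₂ − V₁, and let u : ℤ×ℤ → ℝ be the axis-aligned step image u(i,j) = V₁ if i ≤ m and u(i,j) = V₂ if i > m. Then for every j ∈ ℤ the Perona–Malik update changes the value at (m, j): u_new(m,j) − u(m,j) = (Δt/h²) · g_a(|δ|/(2h)) · δ ≠ 0. Hence, in contrast with the paper's scheme, the Perona–Malik discretization does not preserve a sharp straight edge aligned with the grid axes. -/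
/-! Along a grid-aligned step every row sees the same one-dimensional profile, so the vertical
differences vanish and only the horizontal flux between columns `m` and `m + 1` survives. Both
adjacent diffusivities equal `g (|δ| / (2h))`, which is positive, so the value at the last column
before the jump moves by `(Δt / h²) · g (|δ| / (2h)) · δ ≠ 0`. -/

open Real

section DependsOnlyOnFst

variable {h Δt : ℝ} {g : ℝ → ℝ} {u G unew : ℤ → ℤ → ℝ} {f : ℤ → ℝ}

lemma diffusivity_eq_of_depends_only_on_fst (hh : 0 < h)
    (hG : ∀ i j : ℤ, G i j =
      g (√(((u (i + 1) j - u (i - 1) j) / (2 * h)) ^ 2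
        + ((u i (j + 1) - u i (j - 1)) / (2 * h)) ^ 2)))
    (hf : ∀ i j, u i j = f i) (i j : ℤ) :
    G i j = g (|f (i + 1) - f (i - 1)| / (2 * h)) := by
  rw [hG, hf, hf, hf, hf, sub_self, zero_div, zero_pow two_ne_zero, add_zero,
    sqrt_sq_eq_abs, abs_div, abs_of_pos (by positivity : (0 : ℝ) < 2 * h)]

lemma update_sub_of_depends_only_on_fst
    (hnew : ∀ i j : ℤ, unew i j = u i j + (Δt / h ^ 2) *
      ((G i j + G (i + 1) j) / 2 * (u (i + 1) j - u i j)
        - (G (i - 1) j + G i j) / 2 * (u i j - u (i - 1) j)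
        + (G i j + G i (j + 1)) / 2 * (u i (j + 1) - u i j)
        - (G i (j - 1) + G i j) / 2 * (u i j - u i (j - 1))))
    (hf : ∀ i j, u i j = f i) (i j : ℤ) :
    unew i j - u i j = (Δt / h ^ 2) *
      ((G i j + G (i + 1) j) / 2 * (f (i + 1) - f i)
        - (G (i - 1) j + G i j) / 2 * (f i - f (i - 1))) := by
  simp only [hnew, hf]
  ring

end DependsOnlyOnFst

def stepProfile (m : ℤ) (V₁ V₂ : ℝ) (i : ℤ) : ℝ := if i ≤ m then V₁ else V₂

lemma stepProfile_of_le {m i : ℤ} (V₁ V₂ : ℝ) (hi : i ≤ m) : stepProfile m V₁ V₂ i = V₁ :=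
  if_pos hi

lemma stepProfile_of_lt {m i : ℤ} (V₁ V₂ : ℝ) (hi : m < i) : stepProfile m V₁ V₂ i = V₂ :=
  if_neg hi.not_ge

theorem stmt_15_general (a h Δt : ℝ) (hh : 0 < h) (hΔt : Δt ≠ 0)
    (g : ℝ → ℝ) (hg : ∀ η : ℝ, g η = (1 + η ^ 2 / a ^ 2)⁻¹)
    (u G unew : ℤ → ℤ → ℝ)
    (hG : ∀ i j : ℤ, G i j =
      g (Real.sqrt (((u (i + 1) j - u (i - 1) j) / (2 * h)) ^ 2
        + ((u i (j + 1) - u i (j - 1)) / (2 * h)) ^ 2)))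
    (hnew : ∀ i j : ℤ, unew i j = u i j + (Δt / h ^ 2) *
      ((G i j + G (i + 1) j) / 2 * (u (i + 1) j - u i j)
        - (G (i - 1) j + G i j) / 2 * (u i j - u (i - 1) j)
        + (G i j + G i (j + 1)) / 2 * (u i (j + 1) - u i j)
        - (G i (j - 1) + G i j) / 2 * (u i j - u i (j - 1))))
    (m : ℤ) (V₁ V₂ : ℝ) (hV : V₁ ≠ V₂) (δ : ℝ) (hδ : δ = V₂ - V₁)
    (hu : ∀ i j : ℤ, u i j = if i ≤ m then V₁ else V₂) :
    ∀ j : ℤ,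
      unew m j - u m j = (Δt / h ^ 2) * g (|δ| / (2 * h)) * δ ∧
      unew m j - u m j ≠ 0 := by
  intro j
  have hf : ∀ i j, u i j = stepProfile m V₁ V₂ i := hu
  obtain ⟨hf_pred, hf_m, hf_succ, hf_succ_succ⟩ :
      stepProfile m V₁ V₂ (m - 1) = V₁ ∧ stepProfile m V₁ V₂ m = V₁ ∧
        stepProfile m V₁ V₂ (m + 1) = V₂ ∧ stepProfile m V₁ V₂ (m + 1 + 1) = V₂ :=
    ⟨stepProfile_of_le _ _ (by omega), stepProfile_of_le _ _ le_rfl,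
      stepProfile_of_lt _ _ (by omega), stepProfile_of_lt _ _ (by omega)⟩
  have hGm : G m j = g (|δ| / (2 * h)) := by
    rw [diffusivity_eq_of_depends_only_on_fst hh hG hf, hf_succ, hf_pred, hδ]
  have hGm1 : G (m + 1) j = g (|δ| / (2 * h)) := by
    rw [diffusivity_eq_of_depends_only_on_fst hh hG hf, add_sub_cancel_right, hf_succ_succ, hf_m, hδ]
  have hstep : unew m j - u m j = (Δt / h ^ 2) * g (|δ| / (2 * h)) * δ := by
    rw [update_sub_of_depends_only_on_fst hnew hf, hGm, hGm1, hf_pred, hf_m, hf_succ, hδ]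
    ring
  have hg_pos : 0 < g (|δ| / (2 * h)) := by rw [hg]; positivity
  refine ⟨hstep, hstep ▸ mul_ne_zero (mul_ne_zero ?_ hg_pos.ne') ?_⟩
  · exact div_ne_zero hΔt (pow_ne_zero 2 hh.ne')
  · exact hδ ▸ sub_ne_zero.mpr hV.symm

/-- The explicit Perona–Malik finite-difference scheme does not preserve a
sharp straight edge aligned with the grid axes: for the step image
u(i,j) = V₁ if i ≤ m, V₂ if i > m (with V₁ ≠ V₂, δ = V₂ − V₁), the update at
(m, j) changes the value by exactly (Δt/h²)·g_a(|δ|/(2h))·δ ≠ 0, for every j. -/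
theorem stmt_15 (a h Δt : ℝ) (ha : 0 < a) (hh : 0 < h) (hΔt : Δt ≠ 0)
    (g : ℝ → ℝ) (hg : ∀ η : ℝ, g η = (1 + η ^ 2 / a ^ 2)⁻¹)
    (u G unew : ℤ → ℤ → ℝ)
    (hG : ∀ i j : ℤ, G i j =
      g (Real.sqrt (((u (i + 1) j - u (i - 1) j) / (2 * h)) ^ 2
        + ((u i (j + 1) - u i (j - 1)) / (2 * h)) ^ 2)))
    (hnew : ∀ i j : ℤ, unew i j = u i j + (Δt / h ^ 2) *
      ((G i j + G (i + 1) j) / 2 * (u (i + 1) j - u i j)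
        - (G (i - 1) j + G i j) / 2 * (u i j - u (i - 1) j)
        + (G i j + G i (j + 1)) / 2 * (u i (j + 1) - u i j)
        - (G i (j - 1) + G i j) / 2 * (u i j - u i (j - 1))))
    (m : ℤ) (V₁ V₂ : ℝ) (hV : V₁ ≠ V₂) (δ : ℝ) (hδ : δ = V₂ - V₁)
    (hu : ∀ i j : ℤ, u i j = if i ≤ m then V₁ else V₂) :
    ∀ j : ℤ,
      unew m j - u m j = (Δt / h ^ 2) * g (|δ| / (2 * h)) * δ ∧
      unew m j - u m j ≠ 0 :=
  stmt_15_general a h Δt hh hΔt g hg u G unew hG hnew m V₁ V₂ hV δ hδ hu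
end
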